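/- arXiv:2405.17693 — 4 statements merged into one kernel-verified Lean document; each statement's English description precedes it below -/
import Mathlib

section
/- Let h : ℝ^d → ℝ^d satisfy a dissipativity condition ⟨h(x), x⟩ ≥ A|x|^a − B for all x, with constants A, B > 0 and a ≥ 1, and let f(x) = h(x) − A x/(1+|x|²)^{1−a/2}. Define the tamed drift h_λ(x) = A x/(1+|x|²)^{1−a/2} + f(x)/(1+√λ |x|^{2l}) for λ, l > 0. Then for all x ∈ ℝ^d, ⟨h_λ(x), x⟩ ≥ (A/2)|x|^a − max{A/2, B}. -/
open Real
open scoped RealInnerProductSpace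

lemma key_bound (A a r : ℝ) (hA : 0 < A) (ha : 1 ≤ a) (hr : 0 ≤ r) :
    (A / (1 + r ^ 2) ^ (1 - a / 2)) * r ^ 2 ≥ A / 2 * r ^ a - A / 2 := by
  have hbpos : (0:ℝ) < 1 + r ^ 2 := by positivity
  have hppos : (0:ℝ) < (1 + r ^ 2) ^ (1 - a / 2) := rpow_pos_of_pos hbpos _
  rcases le_or_gt r 1 with h1 | h1
  · have hra : r ^ a ≤ 1 := Real.rpow_le_one hr h1 (by linarith)
    have h2 : A / 2 * r ^ a - A / 2 ≤ 0 := by nlinarith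
    have h3 : 0 ≤ (A / (1 + r ^ 2) ^ (1 - a / 2)) * r ^ 2 := by positivity
    linarith
  · have h2 : (1 + r ^ 2) / 2 ≤ r ^ 2 := by nlinarith
    have hQpos : (0:ℝ) < (1 + r ^ 2) ^ (a / 2) := rpow_pos_of_pos hbpos _
    have hPQ : (1 + r ^ 2) ^ (1 - a / 2) * (1 + r ^ 2) ^ (a / 2) = 1 + r ^ 2 := by
      rw [← Real.rpow_add hbpos]
      norm_num
    have e2 : r ^ a ≤ (1 + r ^ 2) ^ (a / 2) := by
      have e3 : r ^ a = (r ^ 2) ^ (a / 2) := by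
        rw [← Real.rpow_natCast r 2, ← Real.rpow_mul hr]
        congr 1; ring
      rw [e3]
      exact Real.rpow_le_rpow (by positivity) (by linarith) (by linarith)
    have e4 : A / 2 * (r ^ a * (1 + r ^ 2) ^ (1 - a / 2))
        ≤ A / 2 * ((1 + r ^ 2) ^ (a / 2) * (1 + r ^ 2) ^ (1 - a / 2)) :=
      mul_le_mul_of_nonneg_left (mul_le_mul_of_nonneg_right e2 hppos.le) (by linarith)
    have main : (A / 2 * r ^ a - A / 2) * (1 + r ^ 2) ^ (1 - a / 2) ≤ A * r ^ 2 := by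
      nlinarith [mul_pos hA hppos]
    have e5 : A / (1 + r ^ 2) ^ (1 - a / 2) * r ^ 2 = A * r ^ 2 / (1 + r ^ 2) ^ (1 - a / 2) := by
      ring
    rw [ge_iff_le, e5, le_div_iff₀ hppos]
    exact main

theorem tamed_drift_dissipativity (d : ℕ)
    (h : EuclideanSpace ℝ (Fin d) → EuclideanSpace ℝ (Fin d))
    (A B a l lam : ℝ) (hA : 0 < A) (hB : 0 < B) (ha : 1 ≤ a) (hl : 0 < l)
    (hlam : 0 < lam)
    (hdiss : ∀ x, ⟪h x, x⟫ ≥ A * ‖x‖ ^ a - B) :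
    ∀ x : EuclideanSpace ℝ (Fin d),
      ⟪(A / (1 + ‖x‖ ^ 2) ^ (1 - a / 2)) • x
        + (1 / (1 + Real.sqrt lam * ‖x‖ ^ (2 * l))) •
            (h x - (A / (1 + ‖x‖ ^ 2) ^ (1 - a / 2)) • x), x⟫
        ≥ (A / 2) * ‖x‖ ^ a - max (A / 2) B := by
  intro x
  set r := ‖x‖ with hr
  set c : ℝ := A / (1 + r ^ 2) ^ (1 - a / 2) with hc
  set s : ℝ := 1 / (1 + Real.sqrt lam * r ^ (2 * l)) with hs
  have hsq : 0 ≤ Real.sqrt lam * r ^ (2 * l) := by positivity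
  have hs0 : 0 < s := by positivity
  have hs1 : s ≤ 1 := by
    rw [hs, div_le_one (by linarith)]
    linarith
  have hexp : ⟪c • x + s • (h x - c • x), x⟫ = c * r ^ 2 + s * (⟪h x, x⟫ - c * r ^ 2) := by
    rw [inner_add_left, real_inner_smul_left, real_inner_smul_left, inner_sub_left,
      real_inner_smul_left, real_inner_self_eq_norm_sq]
    try ring
  rw [hexp]
  have hk := key_bound A a r hA ha (norm_nonneg x)
  have hd := hdiss x
  have hM1 : A / 2 ≤ max (A / 2) B := le_max_left _ _
  have hM2 : B ≤ max (A / 2) B := le_max_right _ _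
  have hra : 0 ≤ r ^ a := Real.rpow_nonneg (norm_nonneg x) a
  have hu : 0 ≤ c * r ^ 2 - (A / 2 * r ^ a - max (A / 2) B) := by
    rw [hc]; nlinarith
  have hv : 0 ≤ ⟪h x, x⟫ - (A / 2 * r ^ a - max (A / 2) B) := by nlinarith
  nlinarith [mul_nonneg hs0.le hv, mul_nonneg (by linarith : (0:ℝ) ≤ 1 - s) hu]
end

section
/- Let h : ℝ^d → ℝ^d satisfy |h(x)| ≤ L(1+|x|^{2l}) for all x with L, l > 0. With h_λ defined as the tamed drift h_λ(x) = A x/(1+|x|²)^{1−a/2} + (h(x) − A x/(1+|x|²)^{1−a/2})/(1+√λ|x|^{2l}), where 1 ≤ a ≤ 2 and λ ∈ (0,1], one has |h_λ(x)|² ≤ 4A²|x|^a + 2L²/λ + 4A² for all x ∈ ℝ^d. -/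
open Real
open scoped RealInnerProductSpace

theorem tamed_drift_growth (d : ℕ)
    (h : EuclideanSpace ℝ (Fin d) → EuclideanSpace ℝ (Fin d))
    (A L a l lam : ℝ) (hA : 0 < A) (hL : 0 < L) (hl : 0 < l)
    (ha1 : 1 ≤ a) (ha2 : a ≤ 2) (hlam0 : 0 < lam) (hlam1 : lam ≤ 1)
    (hgrowth : ∀ x, ‖h x‖ ≤ L * (1 + ‖x‖ ^ (2 * l))) :
    ∀ x : EuclideanSpace ℝ (Fin d),
      ‖(A / (1 + ‖x‖ ^ 2) ^ (1 - a / 2)) • x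
        + (1 / (1 + Real.sqrt lam * ‖x‖ ^ (2 * l))) •
            (h x - (A / (1 + ‖x‖ ^ 2) ^ (1 - a / 2)) • x)‖ ^ 2
        ≤ 4 * A ^ 2 * ‖x‖ ^ a + 2 * L ^ 2 / lam + 4 * A ^ 2 := by
  intro x
  set r := ‖x‖ with hr_def
  have hr : 0 ≤ r := norm_nonneg x
  have hb : (0:ℝ) < 1 + r ^ 2 := by positivity
  set p := (1 + r ^ 2) ^ (1 - a / 2) with hp_def
  have hp : 0 < p := Real.rpow_pos_of_pos hb _
  have hsl : 0 < Real.sqrt lam := Real.sqrt_pos.mpr hlam0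
  have hsl1 : Real.sqrt lam ≤ 1 := by
    rw [show (1:ℝ) = Real.sqrt 1 from (Real.sqrt_one).symm]
    exact Real.sqrt_le_sqrt hlam1
  have hrl : 0 ≤ r ^ (2 * l) := Real.rpow_nonneg hr _
  have hra : 0 ≤ r ^ a := Real.rpow_nonneg hr _
  set c := 1 / (1 + Real.sqrt lam * r ^ (2 * l)) with hc_def
  have hden : (0:ℝ) < 1 + Real.sqrt lam * r ^ (2 * l) := by positivity
  have hc0 : 0 ≤ c := by positivity
  have hc1 : c ≤ 1 := by
    rw [hc_def, div_le_one hden]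
    linarith [mul_nonneg hsl.le hrl]
  -- scalar bound on the tamed linear part
  have hp2 : p ^ 2 = (1 + r ^ 2) ^ ((2:ℝ) - a) := by
    rw [hp_def, ← Real.rpow_natCast ((1 + r ^ 2) ^ (1 - a / 2)) 2,
      ← Real.rpow_mul hb.le]
    norm_num
    congr 1
    ring
  have hkey : r ^ 2 ≤ (r ^ a + 1) * (1 + r ^ 2) ^ ((2:ℝ) - a) := by
    rcases le_or_gt r 1 with hle | hgt
    · have h1 : r ^ 2 ≤ 1 := by
        have := mul_le_mul hle hle hr (le_trans hr hle)
        calc r ^ 2 = r * r := sq r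
          _ ≤ 1 * 1 := this
          _ = 1 := by norm_num
      have h2 : (1:ℝ) ≤ (1 + r ^ 2) ^ ((2:ℝ) - a) := by
        calc (1:ℝ) = (1:ℝ) ^ ((2:ℝ) - a) := (Real.one_rpow _).symm
          _ ≤ (1 + r ^ 2) ^ ((2:ℝ) - a) :=
            Real.rpow_le_rpow (by norm_num) (by linarith [sq_nonneg r]) (by linarith)
      have h3 : (1:ℝ) * 1 ≤ (r ^ a + 1) * (1 + r ^ 2) ^ ((2:ℝ) - a) :=
        mul_le_mul (by linarith) h2 (by norm_num) (by linarith)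
      linarith
    · have hr1 : (1:ℝ) ≤ r := hgt.le
      have hrpos : (0:ℝ) < r := by linarith
      have h1 : (r ^ 2 : ℝ) ^ ((2:ℝ) - a) ≤ (1 + r ^ 2) ^ ((2:ℝ) - a) :=
        Real.rpow_le_rpow (by positivity) (by linarith) (by linarith)
      have h2 : (r ^ 2 : ℝ) ^ ((2:ℝ) - a) = r ^ ((2:ℝ) * (2 - a)) := by
        rw [← Real.rpow_natCast r 2, ← Real.rpow_mul hr]
        norm_num
      have h3 : r ^ a * r ^ ((2:ℝ) * (2 - a)) = r ^ ((4:ℝ) - a) := by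
        rw [← Real.rpow_add hrpos]
        congr 1
        ring
      have h4 : r ^ ((2:ℝ)) ≤ r ^ ((4:ℝ) - a) :=
        Real.rpow_le_rpow_of_exponent_le hr1 (by linarith)
      have h5 : r ^ ((2:ℝ)) = r ^ 2 := by
        rw [← Real.rpow_natCast r 2]; norm_num
      have hX : 0 ≤ (1 + r ^ 2 : ℝ) ^ ((2:ℝ) - a) :=
        Real.rpow_nonneg (by positivity) _
      calc r ^ 2 = r ^ ((2:ℝ)) := h5.symm
        _ ≤ r ^ ((4:ℝ) - a) := h4
        _ = r ^ a * r ^ ((2:ℝ) * (2 - a)) := h3.symm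
        _ = r ^ a * (r ^ 2 : ℝ) ^ ((2:ℝ) - a) := by rw [h2]
        _ ≤ r ^ a * (1 + r ^ 2) ^ ((2:ℝ) - a) :=
            mul_le_mul_of_nonneg_left h1 hra
        _ ≤ (r ^ a + 1) * (1 + r ^ 2) ^ ((2:ℝ) - a) :=
            mul_le_mul_of_nonneg_right (by linarith) hX
  have hT : (A / p * r) ^ 2 ≤ A ^ 2 * (r ^ a + 1) := by
    have heq : (A / p * r) ^ 2 = A ^ 2 * r ^ 2 / p ^ 2 := by
      field_simp
    rw [heq, hp2, div_le_iff₀ (Real.rpow_pos_of_pos hb _)]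
    calc A ^ 2 * r ^ 2 ≤ A ^ 2 * ((r ^ a + 1) * (1 + r ^ 2) ^ ((2:ℝ) - a)) :=
          mul_le_mul_of_nonneg_left hkey (sq_nonneg A)
      _ = A ^ 2 * (r ^ a + 1) * (1 + r ^ 2) ^ ((2:ℝ) - a) := by ring
  -- scalar bound on the polynomial part
  have hH : c * ‖h x‖ ≤ L / Real.sqrt lam := by
    have hhx : ‖h x‖ ≤ L * (1 + r ^ (2 * l)) := hgrowth x
    rw [hc_def, div_mul_eq_mul_div, div_le_div_iff₀ hden hsl]
    have e1 : 1 * ‖h x‖ * Real.sqrt lam ≤ L * (1 + r ^ (2 * l)) * Real.sqrt lam := by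
      have := mul_le_mul_of_nonneg_right hhx hsl.le
      linarith
    have e2 : (1 + r ^ (2 * l)) * Real.sqrt lam ≤ 1 + Real.sqrt lam * r ^ (2 * l) := by
      have h0 := mul_le_mul_of_nonneg_right hsl1 hrl
      linarith
    have e3 := mul_le_mul_of_nonneg_left e2 hL.le
    have e4 : L * ((1 + r ^ (2 * l)) * Real.sqrt lam)
        = L * (1 + r ^ (2 * l)) * Real.sqrt lam := by ring
    linarith [e1, e3]
  have hH2 : (c * ‖h x‖) ^ 2 ≤ L ^ 2 / lam := by
    have h1 : (c * ‖h x‖) ^ 2 ≤ (L / Real.sqrt lam) ^ 2 :=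
      pow_le_pow_left₀ (mul_nonneg hc0 (norm_nonneg _)) hH 2
    have h2 : (L / Real.sqrt lam) ^ 2 = L ^ 2 / lam := by
      rw [div_pow, Real.sq_sqrt hlam0.le]
    linarith [h1, h2.le, h2.ge]
  -- rewrite the vector as a convex combination
  have hvec : (A / p) • x + c • (h x - (A / p) • x)
      = (1 - c) • ((A / p) • x) + c • h x := by
    module
  have hAp : (0:ℝ) ≤ A / p := by positivity
  have hnorm : ‖(A / p) • x + c • (h x - (A / p) • x)‖
      ≤ A / p * r + c * ‖h x‖ := by
    rw [hvec]
    refine (norm_add_le _ _).trans ?_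
    rw [norm_smul, norm_smul, norm_smul,
      Real.norm_of_nonneg (by linarith : (0:ℝ) ≤ 1 - c),
      Real.norm_of_nonneg hc0, Real.norm_of_nonneg hAp]
    have h0 : 0 ≤ c * (A / p * r) := mul_nonneg hc0 (mul_nonneg hAp hr)
    linarith
  have hsq : ‖(A / p) • x + c • (h x - (A / p) • x)‖ ^ 2
      ≤ (A / p * r + c * ‖h x‖) ^ 2 :=
    pow_le_pow_left₀ (norm_nonneg _) hnorm 2
  have hexp : (A / p * r + c * ‖h x‖) ^ 2
      ≤ 2 * (A / p * r) ^ 2 + 2 * (c * ‖h x‖) ^ 2 := by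
    linarith [sq_nonneg (A / p * r - c * ‖h x‖)]
  have h1 : 0 ≤ A ^ 2 * r ^ a := mul_nonneg (sq_nonneg A) hra
  have h2 : 2 * L ^ 2 / lam = 2 * (L ^ 2 / lam) := by ring
  have h3 : 0 ≤ A ^ 2 := sq_nonneg A
  rw [h2]
  clear hvec hnorm hgrowth
  linarith [hsq, hexp, hT, hH2]
end

section
/- Let f : ℝ^d → ℝ be f(x) = |x|^{2r+2} with r ≥ 0, so ∇f(x) = (2r+2)|x|^{2r} x. Then for all x, y ∈ ℝ^d, ⟨∇f(x) − ∇f(y), x − y⟩ ≥ (r+1)(|x|^{2r} + |y|^{2r}) |x − y|². -/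
open scoped RealInnerProductSpace

theorem grad_norm_pow_monotonicity (d : ℕ) (r : ℝ) (hr : 0 ≤ r)
    (x y : EuclideanSpace ℝ (Fin d)) :
    ⟪((2 * r + 2) * ‖x‖ ^ (2 * r)) • x - ((2 * r + 2) * ‖y‖ ^ (2 * r)) • y,
        x - y⟫
      ≥ (r + 1) * (‖x‖ ^ (2 * r) + ‖y‖ ^ (2 * r)) * ‖x - y‖ ^ 2 := by
  have hxy : ‖x - y‖ ^ 2 = ‖x‖ ^ 2 - 2 * ⟪x, y⟫ + ‖y‖ ^ 2 := norm_sub_sq_real x y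
  have hexp : ⟪((2 * r + 2) * ‖x‖ ^ (2 * r)) • x - ((2 * r + 2) * ‖y‖ ^ (2 * r)) • y, x - y⟫
      = (2 * r + 2) * ‖x‖ ^ (2 * r) * (‖x‖ ^ 2 - ⟪x, y⟫)
        + (2 * r + 2) * ‖y‖ ^ (2 * r) * (‖y‖ ^ 2 - ⟪x, y⟫) := by
    simp only [inner_sub_left, inner_sub_right, real_inner_smul_left,
      real_inner_self_eq_norm_sq, real_inner_comm x y]
    ring
  have hmono : 0 ≤ (‖x‖ ^ (2 * r) - ‖y‖ ^ (2 * r)) * (‖x‖ ^ 2 - ‖y‖ ^ 2) := by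
    rcases le_total ‖x‖ ‖y‖ with h | h
    · have h1 := Real.rpow_le_rpow (norm_nonneg x) h (by linarith : (0:ℝ) ≤ 2 * r)
      have h2 := pow_le_pow_left₀ (norm_nonneg x) h 2
      nlinarith
    · have h1 := Real.rpow_le_rpow (norm_nonneg y) h (by linarith : (0:ℝ) ≤ 2 * r)
      have h2 := pow_le_pow_left₀ (norm_nonneg y) h 2
      nlinarith
  rw [ge_iff_le, hexp, hxy]
  nlinarith [mul_nonneg (by linarith : (0:ℝ) ≤ r + 1) hmono]
end

section
/- Let u : ℝ^d → ℝ be differentiable with ⟨∇u(x) − ∇u(y), x − y⟩ ≥ −L(1 + |x|^l + |y|^l)|x − y|² for all x, y, and let u_{r,λ}(x) = u(x) + λ|x|^{2r+2} with λ > 0 and 2r > l. Then ⟨∇u_{r,λ}(x) − ∇u_{r,λ}(y), x − y⟩ ≥ (λ(r+1)(|x|^{2r} + |y|^{2r}) − L(|x|^l + |y|^l) − L)|x − y|² for all x, y ∈ ℝ^d. -/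
/-!
The gradient of `λ‖x‖^(2r+2)` is `λ(2r+2)‖x‖^(2r) x`, and for `s ≥ 0` the field `x ↦ ‖x‖^s x`
is strongly monotone with the position-dependent modulus `(‖x‖^s + ‖y‖^s)/2`: the
cross term in `⟪‖x‖^s x - ‖y‖^s y, x - y⟫` is `(‖x‖^s - ‖y‖^s)(‖x‖² - ‖y‖²)/2 ≥ 0`. Adding
`λ(2r+2)` times this to the assumed one-sided bound for `∇u` gives the claim.
-/

open scoped RealInnerProductSpace

section Gradient

variable {E : Type*} [NormedAddCommGroup E] [InnerProductSpace ℝ E] [CompleteSpace E]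
  {f g : E → ℝ} {f' g' x : E}

theorem HasGradientAt.add (hf : HasGradientAt f f' x) (hg : HasGradientAt g g' x) :
    HasGradientAt (fun z => f z + g z) (f' + g') x := by
  rw [hasGradientAt_iff_hasFDerivAt, map_add]
  exact hf.hasFDerivAt.add hg.hasFDerivAt

theorem HasGradientAt.const_mul (c : ℝ) (hf : HasGradientAt f f' x) :
    HasGradientAt (fun z => c * f z) (c • f') x := by
  rw [hasGradientAt_iff_hasFDerivAt, map_smul]
  exact hf.hasFDerivAt.const_mul c

theorem hasGradientAt_norm_rpow (x : E) {p : ℝ} (hp : 1 < p) :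
    HasGradientAt (fun z : E => ‖z‖ ^ p) ((p * ‖x‖ ^ (p - 2)) • x) x := by
  rw [hasGradientAt_iff_hasFDerivAt, map_smul]
  exact hasFDerivAt_norm_rpow x hp

end Gradient

theorem inner_norm_rpow_smul_sub_ge {E : Type*} [NormedAddCommGroup E] [InnerProductSpace ℝ E]
    {s : ℝ} (hs : 0 ≤ s) (x y : E) :
    (‖x‖ ^ s + ‖y‖ ^ s) / 2 * ‖x - y‖ ^ 2 ≤ ⟪‖x‖ ^ s • x - ‖y‖ ^ s • y, x - y⟫ := by
  have cross : 0 ≤ (‖x‖ ^ s - ‖y‖ ^ s) * (‖x‖ ^ 2 - ‖y‖ ^ 2) := by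
    rcases le_total ‖x‖ ‖y‖ with h | h
    · exact mul_nonneg_of_nonpos_of_nonpos
        (sub_nonpos.2 (Real.rpow_le_rpow (norm_nonneg x) h hs))
        (sub_nonpos.2 (pow_le_pow_left₀ (norm_nonneg x) h 2))
    · exact mul_nonneg
        (sub_nonneg.2 (Real.rpow_le_rpow (norm_nonneg y) h hs))
        (sub_nonneg.2 (pow_le_pow_left₀ (norm_nonneg y) h 2))
  have expand : ⟪‖x‖ ^ s • x - ‖y‖ ^ s • y, x - y⟫
      = (‖x‖ ^ s + ‖y‖ ^ s) / 2 * ‖x - y‖ ^ 2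
        + (‖x‖ ^ s - ‖y‖ ^ s) * (‖x‖ ^ 2 - ‖y‖ ^ 2) / 2 := by
    simp only [inner_sub_left, inner_sub_right, real_inner_smul_left,
      real_inner_self_eq_norm_sq, real_inner_comm y x, norm_sub_sq_real]
    ring
  linarith

theorem regularized_potential_monotonicity_general (d : ℕ)
    (u : EuclideanSpace ℝ (Fin d) → ℝ)
    (g greg : EuclideanSpace ℝ (Fin d) → EuclideanSpace ℝ (Fin d))
    (L l r lam : ℝ) (hl : 0 < l) (hlam : 0 < lam)
    (hr : l < 2 * r)
    (hgrad : ∀ x, HasGradientAt u (g x) x)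
    (hmono : ∀ x y, ⟪g x - g y, x - y⟫ ≥ -L * (1 + ‖x‖ ^ l + ‖y‖ ^ l) * ‖x - y‖ ^ 2)
    (hgreg : ∀ x, HasGradientAt (fun z => u z + lam * ‖z‖ ^ (2 * r + 2)) (greg x) x) :
    ∀ x y, ⟪greg x - greg y, x - y⟫
      ≥ (lam * (r + 1) * (‖x‖ ^ (2 * r) + ‖y‖ ^ (2 * r))
          - L * (‖x‖ ^ l + ‖y‖ ^ l) - L) * ‖x - y‖ ^ 2 := by
  have hr0 : 0 ≤ 2 * r := by linarith
  have hp : (1 : ℝ) < 2 * r + 2 := by linarith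
  set c := lam * (2 * r + 2) with hc_def
  have hc : 0 ≤ c := by positivity
  have greg_eq : ∀ z, greg z = g z + c • ‖z‖ ^ (2 * r) • z := fun z => by
    refine (hgreg z).unique ?_
    convert (hgrad z).add ((hasGradientAt_norm_rpow z hp).const_mul lam) using 2
    rw [add_sub_cancel_right, smul_smul, smul_smul, hc_def]
    ring_nf
  intro x y
  have split : ⟪greg x - greg y, x - y⟫
      = ⟪g x - g y, x - y⟫ + c * ⟪‖x‖ ^ (2 * r) • x - ‖y‖ ^ (2 * r) • y, x - y⟫ := by
    rw [greg_eq, greg_eq, add_sub_add_comm, ← smul_sub, inner_add_left, real_inner_smul_left]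
  have hreg := mul_le_mul_of_nonneg_left (inner_norm_rpow_smul_sub_ge hr0 x y) hc
  rw [hc_def] at hreg
  rw [split]
  linarith [hmono x y]

theorem regularized_potential_monotonicity (d : ℕ)
    (u : EuclideanSpace ℝ (Fin d) → ℝ)
    (g greg : EuclideanSpace ℝ (Fin d) → EuclideanSpace ℝ (Fin d))
    (L l r lam : ℝ) (hL : 0 < L) (hl : 0 < l) (hlam : 0 < lam)
    (hr : l < 2 * r)
    (hgrad : ∀ x, HasGradientAt u (g x) x)
    (hmono : ∀ x y, ⟪g x - g y, x - y⟫ ≥ -L * (1 + ‖x‖ ^ l + ‖y‖ ^ l) * ‖x - y‖ ^ 2)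
    (hgreg : ∀ x, HasGradientAt (fun z => u z + lam * ‖z‖ ^ (2 * r + 2)) (greg x) x) :
    ∀ x y, ⟪greg x - greg y, x - y⟫
      ≥ (lam * (r + 1) * (‖x‖ ^ (2 * r) + ‖y‖ ^ (2 * r))
          - L * (‖x‖ ^ l + ‖y‖ ^ l) - L) * ‖x - y‖ ^ 2 :=
  regularized_potential_monotonicity_general d u g greg L l r lam hl hlam hr hgrad hmono hgreg
end
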